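/- There exist constants K > 0 and K' > 0 depending only on d such that for every measurable function F : X × ℝ^d → [0,∞), one has ∫_X (∫_{ℝ^d} F(x,v) dv)² dμ(x) ≤ K ∫_X ∫_{ℝ^d} |v|^{3d/2} F(x,v) dv dμ(x) + K' ∫_X ∫_{ℝ^d} F(x,v)⁴ dv dμ(x) (an inequality in [0,∞]). -/

import Mathlib

/-!
For `f ≥ 0` on an `n`-dimensional space put `M = ∫ |v|^{3n/2} f`, `Q = ∫ f⁴`,
`S = M + Q`. Split `∫ f` at the radius `R = S^{1/(3n)}`. On the ball, Hölder with exponents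
`4/3, 4` gives `∫_{|v| ≤ R} f ≤ |B_R|^{3/4} Q^{1/4} ≤ |B_1|^{3/4} S^{1/2}`; outside it,
`R^{3n/2} ∫_{|v| > R} f ≤ M ≤ S` gives `∫_{|v| > R} f ≤ S^{1/2}`. Squaring,
`(∫ f)² ≤ (1 + |B_1|^{3/4})² (M + Q)`, and integrating in `x` gives the estimate for `F`.
-/

open MeasureTheory ENNReal Metric

lemma ofReal_rpow_mul_setLIntegral_compl_closedBall_le {E : Type*} [NormedAddCommGroup E]
    [MeasurableSpace E] [OpensMeasurableSpace E] (μ : Measure E) {α : ℝ} (hα : 0 ≤ α) (R : ℝ)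
    (f : E → ℝ≥0∞) :
    ENNReal.ofReal R ^ α * ∫⁻ v in (closedBall 0 R)ᶜ, f v ∂μ ≤ ∫⁻ v, ‖v‖ₑ ^ α * f v ∂μ :=
  calc ENNReal.ofReal R ^ α * ∫⁻ v in (closedBall 0 R)ᶜ, f v ∂μ
      ≤ ∫⁻ v in (closedBall 0 R)ᶜ, ENNReal.ofReal R ^ α * f v ∂μ := lintegral_const_mul_le _ _
    _ ≤ ∫⁻ v in (closedBall 0 R)ᶜ, ‖v‖ₑ ^ α * f v ∂μ := by
      refine setLIntegral_mono' measurableSet_closedBall.compl fun v hv => ?_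
      have hRv : R ≤ ‖v‖ := by
        simp only [Set.mem_compl_iff, mem_closedBall_zero_iff, not_le] at hv
        exact hv.le
      gcongr
      rw [← ofReal_norm]
      exact ENNReal.ofReal_le_ofReal hRv
    _ ≤ ∫⁻ v, ‖v‖ₑ ^ α * f v ∂μ := setLIntegral_le_lintegral _ _

lemma setLIntegral_le_measure_rpow_mul_lintegral_rpow {α : Type*} [MeasurableSpace α]
    (μ : Measure α) {p q : ℝ} (hpq : p.HolderConjugate q) (s : Set α) {f : α → ℝ≥0∞}
    (hf : AEMeasurable f μ) :
    ∫⁻ x in s, f x ∂μ ≤ μ s ^ (1 / p) * (∫⁻ x, f x ^ q ∂μ) ^ (1 / q) := by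
  have holder := lintegral_mul_le_Lp_mul_Lq (μ.restrict s) hpq aemeasurable_const
    hf.restrict (f := fun _ => 1)
  simp only [Pi.mul_apply, one_mul, one_rpow, setLIntegral_one] at holder
  refine holder.trans (mul_le_mul_right ?_ _)
  exact rpow_le_rpow (setLIntegral_le_lintegral _ _) (one_div_nonneg.mpr hpq.symm.nonneg)

section Constant

variable {E : Type*} [NormedAddCommGroup E] [MeasurableSpace E] (μ : Measure E)

noncomputable def marginalConst : ℝ≥0∞ := (1 + μ (ball 0 1) ^ (3 / 4 : ℝ)) ^ 2

lemma marginalConst_ne_top [ProperSpace E] [IsFiniteMeasureOnCompacts μ] :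
    marginalConst μ ≠ ∞ :=
  pow_ne_top <| add_ne_top.mpr
    ⟨one_ne_top, rpow_ne_top_of_nonneg (by norm_num) measure_ball_lt_top.ne⟩

lemma marginalConst_ne_zero : marginalConst μ ≠ 0 := by simp [marginalConst]

end Constant

section AddHaar

variable {E : Type*} [NormedAddCommGroup E] [NormedSpace ℝ E] [FiniteDimensional ℝ E]
  [MeasurableSpace E] [BorelSpace E] (μ : Measure E) [μ.IsAddHaarMeasure]

lemma addHaar_closedBall_toReal_rpow_one_div_finrank [Nontrivial E] (x : E) {t : ℝ≥0∞}
    (ht : t ≠ ∞) :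
    μ (closedBall x (t ^ (1 / Module.finrank ℝ E : ℝ)).toReal) = t * μ (ball 0 1) := by
  have hn : (Module.finrank ℝ E : ℝ) ≠ 0 := by
    have := Module.finrank_pos (R := ℝ) (M := E); positivity
  rw [Measure.addHaar_closedBall _ _ toReal_nonneg, ofReal_pow toReal_nonneg,
    ofReal_toReal (rpow_ne_top_of_nonneg (by positivity) ht), ← rpow_natCast, ← rpow_mul,
    one_div_mul_cancel hn, rpow_one]

lemma setLIntegral_closedBall_le_rpow_mul_lintegral_pow_four [Nontrivial E] {t : ℝ≥0∞}
    (ht : t ≠ ∞) {f : E → ℝ≥0∞} (hf : AEMeasurable f μ) :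
    ∫⁻ v in closedBall 0 ((t ^ (1 / 3 : ℝ)) ^ (1 / Module.finrank ℝ E : ℝ)).toReal, f v ∂μ ≤
      μ (ball 0 1) ^ (3 / 4 : ℝ) * t ^ (1 / 4 : ℝ) * (∫⁻ v, f v ^ 4 ∂μ) ^ (1 / 4 : ℝ) := by
  have hpq : (4 / 3 : ℝ).HolderConjugate 4 :=
    Real.holderConjugate_iff.mpr ⟨by norm_num, by norm_num⟩
  refine (setLIntegral_le_measure_rpow_mul_lintegral_rpow μ hpq _ hf).trans_eq ?_
  rw [addHaar_closedBall_toReal_rpow_one_div_finrank μ 0 (rpow_ne_top_of_nonneg (by norm_num) ht),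
    mul_rpow_of_nonneg _ _ (by norm_num), ← rpow_mul, mul_comm (t ^ _)]
  norm_num only [rpow_ofNat]

theorem sq_lintegral_le_marginalConst_mul_moment_add_lintegral_pow [Nontrivial E]
    {f : E → ℝ≥0∞} (hf : AEMeasurable f μ) :
    (∫⁻ v, f v ∂μ) ^ 2 ≤ marginalConst μ *
      ((∫⁻ v, ‖v‖ₑ ^ (3 * (Module.finrank ℝ E : ℝ) / 2) * f v ∂μ) + ∫⁻ v, f v ^ 4 ∂μ) := by
  set n : ℝ := (Module.finrank ℝ E : ℝ)
  set M := ∫⁻ v, ‖v‖ₑ ^ (3 * n / 2) * f v ∂μ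
  set Q := ∫⁻ v, f v ^ 4 ∂μ
  set S := M + Q
  rcases eq_or_ne S ∞ with hS_top | hS_top
  · simp [hS_top, mul_top (marginalConst_ne_zero μ)]
  rcases eq_or_ne S 0 with hS_zero | hS_zero
  · have hf_zero : f =ᵐ[μ] 0 := by
      filter_upwards [(lintegral_eq_zero_iff' (hf.pow_const 4)).mp (add_eq_zero.mp hS_zero).2]
        with v hv
      simpa using hv
    simp [lintegral_congr_ae hf_zero]
  have hn : n ≠ 0 := by have := Module.finrank_pos (R := ℝ) (M := E); positivity
  have hS_cbrt_top : S ^ (1 / 3 : ℝ) ≠ ∞ := rpow_ne_top_of_nonneg (by norm_num) hS_top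
  set r := (S ^ (1 / 3 : ℝ)) ^ (1 / n)
  have hr : ENNReal.ofReal r.toReal = r :=
    ofReal_toReal (rpow_ne_top_of_nonneg (by positivity) hS_cbrt_top)
  set B := closedBall (0 : E) r.toReal
  have h_ball : ∫⁻ v in B, f v ∂μ ≤ μ (ball 0 1) ^ (3 / 4 : ℝ) * S ^ (1 / 2 : ℝ) :=
    calc ∫⁻ v in B, f v ∂μ ≤ μ (ball 0 1) ^ (3 / 4 : ℝ) * S ^ (1 / 4 : ℝ) * Q ^ (1 / 4 : ℝ) :=
          setLIntegral_closedBall_le_rpow_mul_lintegral_pow_four μ hS_top hf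
      _ ≤ μ (ball 0 1) ^ (3 / 4 : ℝ) * S ^ (1 / 4 : ℝ) * S ^ (1 / 4 : ℝ) := by
          gcongr
          exact le_add_self
      _ = μ (ball 0 1) ^ (3 / 4 : ℝ) * S ^ (1 / 2 : ℝ) := by
          rw [mul_assoc, ← rpow_add _ _ hS_zero hS_top]
          norm_num
  have hsqrt_sq : S ^ (1 / 2 : ℝ) * S ^ (1 / 2 : ℝ) = S := by
    rw [← rpow_add _ _ hS_zero hS_top]; norm_num
  have h_tail : ∫⁻ v in Bᶜ, f v ∂μ ≤ S ^ (1 / 2 : ℝ) := by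
    have h := ofReal_rpow_mul_setLIntegral_compl_closedBall_le μ (α := 3 * n / 2) (by positivity)
      r.toReal f
    have hsqrt_ne_zero : S ^ (1 / 2 : ℝ) ≠ 0 := by simp [hS_zero]
    have hsqrt_ne_top : S ^ (1 / 2 : ℝ) ≠ ∞ := rpow_ne_top_of_nonneg (by norm_num) hS_top
    rw [hr, ← rpow_mul, ← rpow_mul, show 1 / 3 * (1 / n * (3 * n / 2)) = 1 / 2 by field_simp] at h
    rw [← ENNReal.mul_le_mul_iff_right hsqrt_ne_zero hsqrt_ne_top, hsqrt_sq]
    exact h.trans le_self_add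
  calc (∫⁻ v, f v ∂μ) ^ 2 = (∫⁻ v in B, f v ∂μ + ∫⁻ v in Bᶜ, f v ∂μ) ^ 2 := by
        rw [lintegral_add_compl f measurableSet_closedBall]
    _ ≤ (μ (ball 0 1) ^ (3 / 4 : ℝ) * S ^ (1 / 2 : ℝ) + S ^ (1 / 2 : ℝ)) ^ 2 := by
        gcongr
    _ = marginalConst μ * S := by
        conv_rhs => rw [marginalConst, ← hsqrt_sq]
        ring

theorem lintegral_sq_lintegral_le_marginalConst_mul [Nontrivial E] {X : Type*}
    [MeasurableSpace X] (ν : Measure X) {F : X × E → ℝ≥0∞} (hF : Measurable F) :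
    ∫⁻ x, (∫⁻ v, F (x, v) ∂μ) ^ 2 ∂ν ≤ marginalConst μ *
      ((∫⁻ x, ∫⁻ v, ‖v‖ₑ ^ (3 * (Module.finrank ℝ E : ℝ) / 2) * F (x, v) ∂μ ∂ν) +
        ∫⁻ x, ∫⁻ v, F (x, v) ^ 4 ∂μ ∂ν) := by
  have h_moment : Measurable fun x ↦
      ∫⁻ v, ‖v‖ₑ ^ (3 * (Module.finrank ℝ E : ℝ) / 2) * F (x, v) ∂μ :=
    ((measurable_snd.enorm.pow_const _).mul hF).lintegral_prod_right'
  calc ∫⁻ x, (∫⁻ v, F (x, v) ∂μ) ^ 2 ∂ν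
      ≤ ∫⁻ x, marginalConst μ *
          ((∫⁻ v, ‖v‖ₑ ^ (3 * (Module.finrank ℝ E : ℝ) / 2) * F (x, v) ∂μ) +
            ∫⁻ v, F (x, v) ^ 4 ∂μ) ∂ν := lintegral_mono fun x ↦
        sq_lintegral_le_marginalConst_mul_moment_add_lintegral_pow μ
          (hF.comp measurable_prodMk_left).aemeasurable
    _ = _ := by
        rw [lintegral_const_mul' _ _ (marginalConst_ne_top μ), lintegral_add_left h_moment]

end AddHaar

/-- There exist constants `K, K' > 0` depending only on `d` such that for every σ-finite
measure space `(X, μ)` and every measurable `F : X × ℝ^d → [0,∞)`, the squared `L²` norm of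
the marginal `F⁰(x) = ∫ F(x,v) dv` is controlled by the `|v|^{3d/2}`-moment plus the `L⁴`
norm of `F` (an inequality in `[0,∞]`). -/
theorem marginal_L2_estimate (d : ℕ) (hd : 1 ≤ d) :
    ∃ K K' : ℝ, 0 < K ∧ 0 < K' ∧
      ∀ (X : Type) (_ : MeasurableSpace X) (μ : Measure X), SigmaFinite μ →
        ∀ F : X × EuclideanSpace ℝ (Fin d) → NNReal, Measurable F →
          (∫⁻ x, (∫⁻ v, (F (x, v) : ℝ≥0∞)) ^ 2 ∂μ)
            ≤ ENNReal.ofReal K *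
                (∫⁻ x, ∫⁻ v, (‖v‖₊ : ℝ≥0∞) ^ (3 * (d : ℝ) / 2) * (F (x, v) : ℝ≥0∞) ∂volume ∂μ)
              + ENNReal.ofReal K' *
                (∫⁻ x, ∫⁻ v, (F (x, v) : ℝ≥0∞) ^ 4 ∂volume ∂μ) := by
  have : Nonempty (Fin d) := ⟨⟨0, hd⟩⟩
  set C := marginalConst (volume : Measure (EuclideanSpace ℝ (Fin d)))
  have hC : 0 < C.toReal := toReal_pos (marginalConst_ne_zero _) (marginalConst_ne_top _)
  refine ⟨C.toReal, C.toReal, hC, hC, fun X _ μ _ F hF => ?_⟩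
  rw [ofReal_toReal (marginalConst_ne_top _), ← mul_add]
  simpa only [finrank_euclideanSpace_fin, enorm_eq_nnnorm] using
    lintegral_sq_lintegral_le_marginalConst_mul volume μ hF.coe_nnreal_ennreal
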